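/- arXiv:1810.09117 — 5 statements merged into one kernel-verified Lean document; each statement's English description precedes it below -/
import Mathlib

section
/- Let P ⊆ ℂ be a nonempty compact set, and let A : P → ℝ^{n×n} and b_1, …, b_m : P → ℝ^n be continuous. Then the following are equivalent: (i) for every continuous g : P → ℝ^n and every ε > 0 there exist real polynomials q_1, …, q_m ∈ ℝ[z] such that sup_{θ∈P} ‖Σ_{j=1}^m q_j(A(θ)) b_j(θ) − g(θ)‖ < ε; (ii) for every continuous f : P → ℂ^n and every ε > 0 there exist complex polynomials p_1, …, p_m ∈ ℂ[z] such that sup_{θ∈P} ‖Σ_{j=1}^m p_j(A(θ)) b_j(θ) − f(θ)‖ < ε. -/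
/-!
Write a complex polynomial as `q + i r` with `q, r` real. Since `A` and the `bⱼ` are real,
`(q + i r)(A) b = q(A) b + i r(A) b`, so a complex combination has the real combinations for
`q` and `r` as its real and imaginary parts. Approximating `Re f` and `Im f` separately gives the
complex approximation; conversely, the real part of a complex approximation of a real target
is a real approximation at least as good.
-/

open Polynomial Matrix

section KrylovSum

variable {ι κ R S : Type*} [Fintype ι] [DecidableEq ι] [Fintype κ] [CommRing R] [CommRing S]

theorem Matrix.aeval_map_map (f : R →+* S) (M : Matrix ι ι R) (p : R[X]) :
    aeval (M.map f) (p.map f) = (aeval M p).map f := by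
  refine (map_aeval_eq_aeval_map (φ := f) (ψ := f.mapMatrix) ?_ p M).symm
  ext c i j
  simp [Matrix.algebraMap_eq_diagonal, Matrix.diagonal_apply, apply_ite f]

/-- `∑ⱼ qⱼ(M) bⱼ`, where `bⱼ` is the `j`-th column of `B`. -/
noncomputable def krylovSum (M : Matrix ι ι R) (B : Matrix ι κ R) (q : κ → R[X]) : ι → R :=
  ∑ j, aeval M (q j) *ᵥ fun i => B i j

variable (M : Matrix ι ι R) (B : Matrix ι κ R)

theorem krylovSum_add (q r : κ → R[X]) :
    krylovSum M B (q + r) = krylovSum M B q + krylovSum M B r := by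
  simp only [krylovSum, Pi.add_apply, map_add, add_mulVec, Finset.sum_add_distrib]

theorem krylovSum_smul (c : R) (q : κ → R[X]) :
    krylovSum M B (c • q) = c • krylovSum M B q := by
  simp only [krylovSum, Pi.smul_apply, map_smul, smul_mulVec, Finset.smul_sum]

theorem krylovSum_map (f : R →+* S) (q : κ → R[X]) :
    krylovSum (M.map f) (B.map f) (fun j => (q j).map f) = f ∘ krylovSum M B q := by
  ext i
  simp only [krylovSum, Matrix.aeval_map_map, Function.comp_apply, Finset.sum_apply,
    map_sum, RingHom.map_mulVec]
  rfl

end KrylovSum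

open Complex

theorem Polynomial.exists_eq_map_ofReal_add_I_smul (p : ℂ[X]) :
    ∃ q r : ℝ[X], p = q.map ofRealHom + I • r.map ofRealHom := by
  induction p using Polynomial.induction_on' with
  | add p₁ p₂ h₁ h₂ =>
    obtain ⟨q₁, r₁, rfl⟩ := h₁
    obtain ⟨q₂, r₂, rfl⟩ := h₂
    exact ⟨q₁ + q₂, r₁ + r₂, by simp only [Polynomial.map_add, smul_add]; abel⟩
  | monomial k a =>
    refine ⟨monomial k a.re, monomial k a.im, ?_⟩
    rw [map_monomial, map_monomial, smul_monomial, ← map_add, smul_eq_mul, mul_comm]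
    simp only [ofRealHom_eq_coe, re_add_im]

variable {ι : Type*} [Fintype ι]

theorem norm_ofReal_add_I_mul_sub_le (u v : ι → ℝ) (f : ι → ℂ) :
    ‖(fun i => (u i : ℂ) + I * v i) - f‖ ≤ ‖u - fun i => (f i).re‖ + ‖v - fun i => (f i).im‖ := by
  refine (pi_norm_le_iff_of_nonneg (by positivity)).2 fun i => ?_
  calc ‖(u i : ℂ) + I * v i - f i‖ ≤ |u i - (f i).re| + |v i - (f i).im| := by
        simpa using norm_le_abs_re_add_abs_im ((u i : ℂ) + I * v i - f i)
    _ ≤ ‖u - fun i => (f i).re‖ + ‖v - fun i => (f i).im‖ :=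
        add_le_add (norm_le_pi_norm (u - fun i => (f i).re) i)
          (norm_le_pi_norm (v - fun i => (f i).im) i)

theorem norm_sub_le_norm_ofReal_add_I_mul_sub (u v g : ι → ℝ) :
    ‖u - g‖ ≤ ‖(fun i => (u i : ℂ) + I * v i) - fun i => (g i : ℂ)‖ := by
  refine (pi_norm_le_iff_of_nonneg (norm_nonneg _)).2 fun i => ?_
  calc ‖u i - g i‖ = |((u i : ℂ) + I * v i - g i).re| := by simp
    _ ≤ ‖(u i : ℂ) + I * v i - g i‖ := abs_re_le_norm _
    _ ≤ _ := norm_le_pi_norm ((fun i => (u i : ℂ) + I * v i) - fun i => (g i : ℂ)) i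

variable {κ : Type*} [DecidableEq ι] [Fintype κ]

theorem krylovSum_ofReal_add_I_smul (M : Matrix ι ι ℝ) (B : Matrix ι κ ℝ) (q r : κ → ℝ[X]) :
    krylovSum (M.map ofRealHom) (B.map ofRealHom)
        (fun j => (q j).map ofRealHom + I • (r j).map ofRealHom)
      = fun i => ((krylovSum M B q i : ℝ) : ℂ) + I * (krylovSum M B r i : ℝ) := by
  have hsplit : (fun j => (q j).map ofRealHom + I • (r j).map ofRealHom)
      = (fun j => (q j).map ofRealHom) + I • fun j => (r j).map ofRealHom := rfl
  rw [hsplit, krylovSum_add, krylovSum_smul, krylovSum_map, krylovSum_map]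
  rfl

def EnsembleReachable {Θ 𝕜 : Type*} [TopologicalSpace Θ] [NormedCommRing 𝕜]
    (M : Θ → Matrix ι ι 𝕜) (B : Θ → Matrix ι κ 𝕜) : Prop :=
  ∀ f : Θ → ι → 𝕜, Continuous f → ∀ ε > 0,
    ∃ q : κ → 𝕜[X], ∀ θ, ‖krylovSum (M θ) (B θ) q - f θ‖ < ε

variable {Θ : Type*} [TopologicalSpace Θ] {M : Θ → Matrix ι ι ℝ} {B : Θ → Matrix ι κ ℝ}

theorem EnsembleReachable.complexify (h : EnsembleReachable M B) :
    EnsembleReachable (fun θ => (M θ).map ofRealHom) (fun θ => (B θ).map ofRealHom) := by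
  intro f hf ε hε
  obtain ⟨q, hq⟩ := h (fun θ i => (f θ i).re) (by fun_prop) (ε / 2) (half_pos hε)
  obtain ⟨r, hr⟩ := h (fun θ i => (f θ i).im) (by fun_prop) (ε / 2) (half_pos hε)
  refine ⟨fun j => (q j).map ofRealHom + I • (r j).map ofRealHom, fun θ => ?_⟩
  rw [krylovSum_ofReal_add_I_smul]
  calc _ ≤ _ := norm_ofReal_add_I_mul_sub_le _ _ (f θ)
    _ < ε / 2 + ε / 2 := add_lt_add (hq θ) (hr θ)
    _ = ε := add_halves ε

theorem EnsembleReachable.of_complexify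
    (h : EnsembleReachable (fun θ => (M θ).map ofRealHom) (fun θ => (B θ).map ofRealHom)) :
    EnsembleReachable M B := by
  intro g hg ε hε
  obtain ⟨p, hp⟩ := h (fun θ i => (g θ i : ℂ)) (by fun_prop) ε hε
  choose q r hqr using fun j => (p j).exists_eq_map_ofReal_add_I_smul
  refine ⟨q, fun θ => ?_⟩
  have hpθ := hp θ
  rw [funext hqr, krylovSum_ofReal_add_I_smul] at hpθ
  exact (norm_sub_le_norm_ofReal_add_I_mul_sub _ _ _).trans_lt hpθ

theorem ensembleReachable_iff_complexify :
    EnsembleReachable M B ↔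
      EnsembleReachable (fun θ => (M θ).map ofRealHom) (fun θ => (B θ).map ofRealHom) :=
  ⟨.complexify, .of_complexify⟩

theorem stmt_0_general {n m : ℕ} (P : Set ℂ)
    (A : P → Matrix (Fin n) (Fin n) ℝ) (B : P → Matrix (Fin n) (Fin m) ℝ) :
    (∀ g : P → Fin n → ℝ, Continuous g → ∀ ε : ℝ, 0 < ε →
        ∃ q : Fin m → Polynomial ℝ, ∀ θ : P,
          ‖(∑ j : Fin m, (Polynomial.aeval (A θ) (q j)).mulVec fun i => B θ i j) - g θ‖ < ε)
    ↔
    (∀ f : P → Fin n → ℂ, Continuous f → ∀ ε : ℝ, 0 < ε →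
        ∃ p : Fin m → Polynomial ℂ, ∀ θ : P,
          ‖(∑ j : Fin m, (Polynomial.aeval ((A θ).map Complex.ofReal) (p j)).mulVec
              fun i => ((B θ i j : ℝ) : ℂ)) - f θ‖ < ε) :=
  ensembleReachable_iff_complexify

/-- A real parameter-dependent pair `(A, B)` (with columns `b_j` of `B`) is
ensemble reachable on `C(P, ℝ^n)` iff its complexification is ensemble reachable on
`C(P, ℂ^n)`. -/
theorem stmt_0 {n m : ℕ} (P : Set ℂ) (hP : IsCompact P) (hPne : P.Nonempty)
    (A : P → Matrix (Fin n) (Fin n) ℝ) (B : P → Matrix (Fin n) (Fin m) ℝ)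
    (hA : Continuous A) (hB : Continuous B) :
    (∀ g : P → Fin n → ℝ, Continuous g → ∀ ε : ℝ, 0 < ε →
        ∃ q : Fin m → Polynomial ℝ, ∀ θ : P,
          ‖(∑ j : Fin m, (Polynomial.aeval (A θ) (q j)).mulVec fun i => B θ i j) - g θ‖ < ε)
    ↔
    (∀ f : P → Fin n → ℂ, Continuous f → ∀ ε : ℝ, 0 < ε →
        ∃ p : Fin m → Polynomial ℂ, ∀ θ : P,
          ‖(∑ j : Fin m, (Polynomial.aeval ((A θ).map Complex.ofReal) (p j)).mulVec
              fun i => ((B θ i j : ℝ) : ℂ)) - f θ‖ < ε) :=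
  stmt_0_general P A B
end

section
/- Let P ⊆ ℂ be compact and let A : P → ℂ^{n×n} and b : P → ℂ^n be continuous such that for every θ ∈ P the Kalman matrix T(θ) := (b(θ), A(θ)b(θ), …, A(θ)^{n−1}b(θ)) has rank n. Then T(θ) is invertible for all θ ∈ P; writing the characteristic polynomial of A(θ) as χ_{A(θ)}(z) = z^n − a_{n−1}(θ) z^{n−1} − ⋯ − a_0(θ), one has T(θ)^{−1} A(θ) T(θ) = A_c(θ), where A_c(θ) is the companion-type matrix whose subdiagonal entries are 1, whose last column is (a_0(θ), a_1(θ), …, a_{n−1}(θ))^T, and whose remaining entries are 0, and T(θ)^{−1} b(θ) = e_1, the first standard basis vector. Moreover, the pair (A, b) is uniformly ensemble reachable on C(P, ℂ^n) if and only if the pair (A_c, e_1) is uniformly ensemble reachable on C(P, ℂ^n). -/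
/-!
By Cayley–Hamilton the last column of `A T` is `A^n b = ∑ aᵢ Aⁱ b`, so `A T = T A_c`;
also `T e₁ = b`. Hence `p(A) b = T p(A_c) e₁` for every polynomial `p`. As `T` and `T⁻¹`
depend continuously on `θ` in the compact set `P`, they are uniformly bounded, so a polynomial
approximating `T⁻¹ f` for `(A_c, e₁)` approximates `f` for `(A, b)` up to a constant factor,
and vice versa.
-/

open Polynomial Matrix

def UniformEnsembleReachable1 {n : ℕ} (P : Set ℂ)
    (A : P → Matrix (Fin n) (Fin n) ℂ) (b : P → Fin n → ℂ) : Prop :=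
  ∀ f : P → Fin n → ℂ, Continuous f → ∀ ε : ℝ, 0 < ε →
    ∃ p : Polynomial ℂ, ∀ θ : P, ‖(Polynomial.aeval (A θ) p).mulVec (b θ) - f θ‖ < ε

theorem Matrix.isUnit_of_rank_eq_card {K n : Type*} [Field K] [Fintype n] [DecidableEq n]
    {M : Matrix n n K} (h : M.rank = Fintype.card n) : IsUnit M := by
  have : LinearMap.range M.mulVecLin = ⊤ := by
    refine Submodule.eq_top_of_finrank_eq ?_
    rw [← Matrix.rank, h, Module.finrank_fintype_fun_eq_card]
  exact mulVec_surjective_iff_isUnit.1 (LinearMap.range_eq_top.1 this)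

theorem Continuous.matrix_inv {X K n : Type*} [TopologicalSpace X] [Field K]
    [TopologicalSpace K] [IsTopologicalRing K] [ContinuousInv₀ K] [Fintype n] [DecidableEq n]
    {M : X → Matrix n n K} (hM : Continuous M) (h : ∀ x, IsUnit (M x)) :
    Continuous fun x => (M x)⁻¹ := by
  refine continuous_iff_continuousAt.2 fun x => (continuousAt_matrix_inv _ ?_).comp hM.continuousAt
  rw [Ring.inverse_eq_inv']
  exact continuousAt_inv₀ ((isUnit_iff_isUnit_det _).1 (h x)).ne_zero

theorem SemiconjBy.aeval {R M : Type*} [CommSemiring R] [Semiring M] [Algebra R M] {s x y : M}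
    (h : SemiconjBy s x y) (p : R[X]) : SemiconjBy s (aeval x p) (aeval y p) := by
  induction p using Polynomial.induction_on' with
  | add p q hp hq => simpa only [map_add] using hp.add_right hq
  | monomial k c =>
    simp only [aeval_monomial]
    exact SemiconjBy.mul_right (Algebra.commute_algebraMap_left c s).symm (h.pow_right k)

attribute [local instance] Matrix.linftyOpNormedAddCommGroup Matrix.linftyOpNormedRing in
theorem Matrix.exists_norm_mulVec_le_of_continuous {X α m n : Type*} [TopologicalSpace X]
    [CompactSpace X] [NormedRing α] [Fintype m] [Fintype n]
    {S : X → Matrix m n α} (hS : Continuous S) :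
    ∃ C > 0, ∀ x v, ‖S x *ᵥ v‖ ≤ C * ‖v‖ := by
  obtain ⟨C, hC⟩ := (isCompact_range hS.norm).bddAbove
  refine ⟨max C 1, by positivity, fun x v => (linfty_opNorm_mulVec _ _).trans ?_⟩
  gcongr
  exact (hC ⟨x, rfl⟩).trans (le_max_left _ _)

theorem Matrix.pow_card_eq_neg_sum_charpoly_coeff {R : Type*} [CommRing R] [Nontrivial R] {n : ℕ}
    (A : Matrix (Fin n) (Fin n) R) : A ^ n = -∑ i : Fin n, A.charpoly.coeff i • A ^ (i : ℕ) := by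
  have h := congrArg (aeval A) A.charpoly_monic.as_sum
  rw [aeval_self_charpoly, charpoly_natDegree_eq_dim, Fintype.card_fin] at h
  simp only [map_add, map_sum, map_mul, map_pow, aeval_X, aeval_C, ← Algebra.smul_def] at h
  rw [Fin.sum_univ_eq_sum_range (fun i => A.charpoly.coeff i • A ^ i)]
  exact eq_neg_of_add_eq_zero_left h.symm

section Kalman

variable {R : Type*} {n : ℕ}

def kalmanMatrix [Semiring R] (A : Matrix (Fin n) (Fin n) R) (b : Fin n → R) :
    Matrix (Fin n) (Fin n) R :=
  Matrix.of fun i k => (A ^ (k : ℕ) *ᵥ b) i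

def companionMatrix [Zero R] [One R] (a : Fin n → R) : Matrix (Fin n) (Fin n) R :=
  Matrix.of fun i j => if (i : ℕ) = (j : ℕ) + 1 then 1 else if (j : ℕ) = n - 1 then a i else 0

theorem kalmanMatrix_mulVec_single_zero [Semiring R] [NeZero n] (A : Matrix (Fin n) (Fin n) R)
    (b : Fin n → R) : kalmanMatrix A b *ᵥ Pi.single 0 1 = b := by
  ext i
  simp [mulVec_single, kalmanMatrix]

theorem mul_kalmanMatrix [CommRing R] [Nontrivial R] (A : Matrix (Fin n) (Fin n) R)
    (b : Fin n → R) :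
    A * kalmanMatrix A b =
      kalmanMatrix A b * companionMatrix fun i => -A.charpoly.coeff i := by
  ext i j
  have hcol : (A * kalmanMatrix A b) i j = (A ^ ((j : ℕ) + 1) *ᵥ b) i := by
    rw [pow_succ', ← mulVec_mulVec]
    rfl
  rw [hcol, mul_apply]
  obtain hj | hj : (j : ℕ) + 1 < n ∨ (j : ℕ) + 1 = n := by omega
  · have hC : ∀ k : Fin n, companionMatrix (fun i => -A.charpoly.coeff i) k j =
        if k = ⟨j + 1, hj⟩ then 1 else 0 := by
      intro k
      simp only [companionMatrix, of_apply, Fin.ext_iff]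
      split_ifs <;> first | rfl | omega
    simp only [hC, mul_ite, mul_one, mul_zero, Finset.sum_ite_eq', Finset.mem_univ, if_true]
    rfl
  · have hC : ∀ k : Fin n, companionMatrix (fun i => -A.charpoly.coeff i) k j =
        -A.charpoly.coeff k := by
      intro k
      have := k.isLt
      simp only [companionMatrix, of_apply]
      split_ifs <;> first | rfl | omega
    rw [hj, pow_card_eq_neg_sum_charpoly_coeff]
    simp [hC, kalmanMatrix, neg_mulVec, sum_mulVec, smul_mulVec, mul_comm]

theorem Continuous.kalmanMatrix {X : Type*} [TopologicalSpace X] [Semiring R] [TopologicalSpace R]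
    [IsTopologicalSemiring R] {A : X → Matrix (Fin n) (Fin n) R} {b : X → Fin n → R}
    (hA : Continuous A) (hb : Continuous b) :
    Continuous fun x => _root_.kalmanMatrix (A x) (b x) :=
  continuous_matrix fun i k => (continuous_apply i).comp ((hA.pow k).matrix_mulVec hb)

end Kalman

section Reachability

variable {n : ℕ} {P : Set ℂ} {A B : P → Matrix (Fin n) (Fin n) ℂ} {b c : P → Fin n → ℂ}

theorem UniformEnsembleReachable1.of_semiconj (hP : IsCompact P)
    {S R : P → Matrix (Fin n) (Fin n) ℂ} (hS : Continuous S) (hR : Continuous R)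
    (hSR : ∀ θ, S θ * R θ = 1) (hSAB : ∀ θ, SemiconjBy (S θ) (A θ) (B θ))
    (hSbc : ∀ θ, S θ *ᵥ b θ = c θ) (h : UniformEnsembleReachable1 P A b) :
    UniformEnsembleReachable1 P B c := by
  intro f hf ε hε
  have : CompactSpace P := isCompact_iff_compactSpace.1 hP
  obtain ⟨C, hC0, hC⟩ := exists_norm_mulVec_le_of_continuous hS
  obtain ⟨p, hp⟩ := h (fun θ => R θ *ᵥ f θ) (hR.matrix_mulVec hf) (ε / C) (by positivity)
  refine ⟨p, fun θ => ?_⟩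
  have key : aeval (B θ) p *ᵥ c θ - f θ = S θ *ᵥ (aeval (A θ) p *ᵥ b θ - R θ *ᵥ f θ) := by
    rw [mulVec_sub, mulVec_mulVec, mulVec_mulVec, ((hSAB θ).aeval p).eq, ← mulVec_mulVec, hSbc,
      hSR, one_mulVec]
  calc ‖aeval (B θ) p *ᵥ c θ - f θ‖
      ≤ C * ‖aeval (A θ) p *ᵥ b θ - R θ *ᵥ f θ‖ := key ▸ hC θ _
    _ < C * (ε / C) := by gcongr; exact hp θ
    _ = ε := mul_div_cancel₀ ε hC0.ne'

theorem uniformEnsembleReachable1_iff_of_semiconj (hP : IsCompact P)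
    {S : P → Matrix (Fin n) (Fin n) ℂ} (hS : Continuous S) (hSu : ∀ θ, IsUnit (S θ))
    (hSAB : ∀ θ, SemiconjBy (S θ) (A θ) (B θ)) (hSbc : ∀ θ, S θ *ᵥ b θ = c θ) :
    UniformEnsembleReachable1 P A b ↔ UniformEnsembleReachable1 P B c := by
  have hdet θ : IsUnit (S θ).det := (isUnit_iff_isUnit_det _).1 (hSu θ)
  have hSi := hS.matrix_inv hSu
  refine ⟨.of_semiconj hP hS hSi (fun θ => mul_nonsing_inv _ (hdet θ)) hSAB hSbc,
    .of_semiconj hP hSi hS (fun θ => nonsing_inv_mul _ (hdet θ)) (fun θ => ?_) (fun θ => ?_)⟩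
  · obtain ⟨u, hu⟩ := hSu θ
    rw [← hu, ← coe_units_inv]
    exact SemiconjBy.units_inv_symm_left (hu ▸ hSAB θ)
  · rw [← hSbc θ, mulVec_mulVec, nonsing_inv_mul _ (hdet θ), one_mulVec]

end Reachability

/-- controllability canonical form.  If the Kalman matrix
`T(θ) = (b(θ), A(θ)b(θ), …, A(θ)^{n−1}b(θ))` has full rank `n` for each `θ`, then it is
invertible, conjugates `A(θ)` to the companion-type matrix `A_c(θ)` built from the
coefficients `a_i(θ) = −coeff_i(χ_{A(θ)})` of the characteristic polynomial
`χ_{A(θ)}(z) = z^n − a_{n−1}(θ)z^{n−1} − ⋯ − a_0(θ)`, maps `b(θ)` to `e_1`, and `(A, b)`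
is uniformly ensemble reachable iff `(A_c, e_1)` is. -/
theorem stmt_9 {n : ℕ} [NeZero n] (P : Set ℂ) (hP : IsCompact P)
    (A : P → Matrix (Fin n) (Fin n) ℂ) (b : P → Fin n → ℂ)
    (hA : Continuous A) (hb : Continuous b)
    (T : P → Matrix (Fin n) (Fin n) ℂ)
    (hT : ∀ θ : P, T θ = Matrix.of fun i k : Fin n => ((A θ ^ (k : ℕ)).mulVec (b θ)) i)
    (hrank : ∀ θ : P, (T θ).rank = n)
    (a : P → Fin n → ℂ)
    (ha : ∀ (θ : P) (i : Fin n), a θ i = -((A θ).charpoly.coeff i))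
    (Ac : P → Matrix (Fin n) (Fin n) ℂ)
    (hAc : ∀ θ : P, Ac θ = Matrix.of fun i j : Fin n =>
      if (i : ℕ) = (j : ℕ) + 1 then 1 else if (j : ℕ) = n - 1 then a θ i else 0) :
    (∀ θ : P, IsUnit (T θ)) ∧
    (∀ θ : P, (T θ)⁻¹ * A θ * T θ = Ac θ) ∧
    (∀ θ : P, (T θ)⁻¹.mulVec (b θ) = Pi.single (0 : Fin n) 1) ∧
    (UniformEnsembleReachable1 P A b ↔
      UniformEnsembleReachable1 P Ac fun _ => Pi.single (0 : Fin n) 1) := by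
  obtain rfl : a = fun θ (i : Fin n) => -(A θ).charpoly.coeff i := funext fun θ => funext (ha θ)
  obtain rfl : T = fun θ => kalmanMatrix (A θ) (b θ) := funext hT
  obtain rfl : Ac = fun θ => companionMatrix fun i => -(A θ).charpoly.coeff i := funext hAc
  have hunit θ : IsUnit (kalmanMatrix (A θ) (b θ)) :=
    isUnit_of_rank_eq_card (by rw [hrank, Fintype.card_fin])
  have hdet θ := (isUnit_iff_isUnit_det _).1 (hunit θ)
  refine ⟨hunit, fun θ => ?_, fun θ => ?_, ?_⟩
  · rw [Matrix.mul_assoc, mul_kalmanMatrix, ← Matrix.mul_assoc, nonsing_inv_mul _ (hdet θ),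
      Matrix.one_mul]
  · rw [← kalmanMatrix_mulVec_single_zero (A θ) (b θ), mulVec_mulVec, nonsing_inv_mul _ (hdet θ),
      one_mulVec]
  · exact (uniformEnsembleReachable1_iff_of_semiconj hP (hA.kalmanMatrix hb) hunit
      (fun θ => (mul_kalmanMatrix _ _).symm) (fun θ => kalmanMatrix_mulVec_single_zero _ _)).symm
end

section
/- Let P ⊆ ℂ be compact and suppose the pair (A, B) with continuous A : P → ℂ^{n×n} and B : P → ℂ^{n36m} is uniformly ensemble reachable on C(P, ℂ^n). Then: (a) for every θ ∈ P the Kalman matrix (B(θ), A(θ)B(θ), …, A(θ)^{n−1}B(θ)) has rank n; (b) for every s ≥ m + 1 and all pairwise distinct parameters θ_1, …, θ_s ∈ P one has σ(A(θ_1)) ∩ σ(A(θ_2)) ∩ ⋯ ∩ σ(A(θ_s)) = ∅. -/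
/-!
For distinct parameters θ₁, …, θₛ, the map `p ↦ (∑ⱼ pⱼ(A θᵢ) bⱼ(θᵢ))ᵢ` has finite-dimensional,
hence closed, range; uniform reachability applied to a continuous (Lagrange) interpolant of
arbitrary target values at the θᵢ shows that this range is dense, so the map is onto.
For s = 1, Cayley–Hamilton puts its range inside the column space of the Kalman matrix, which
gives (a). For (b), a common eigenvalue μ with left eigenvectors vᵢ of the A(θᵢ) turns
`vᵢ ⬝ᵥ (state reached at θᵢ)` into `(vᵢ ᵥ* B θᵢ) ⬝ᵥ (pⱼ(μ))ⱼ`, so the s × m matrix with rows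
`vᵢ ᵥ* B θᵢ` is onto `ℂˢ`, forcing s ≤ m.
-/

open Polynomial Matrix

/-- Uniform ensemble reachability of a pair `(A, B)` on `C(P, ℂ^ι)`. -/
def UniformEnsembleReachable {ι κ : Type*} [Fintype ι] [DecidableEq ι] [Fintype κ]
    (P : Set ℂ) (A : P → Matrix ι ι ℂ) (B : P → Matrix ι κ ℂ) : Prop :=
  ∀ f : P → ι → ℂ, Continuous f → ∀ ε : ℝ, 0 < ε →
    ∃ p : κ → Polynomial ℂ, ∀ θ : P,
      ‖(∑ j : κ, (Polynomial.aeval (A θ) (p j)).mulVec fun i => B θ i j) - f θ‖ < ε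

namespace Matrix

variable {ι κ R : Type*} [Fintype ι] [DecidableEq ι] [Fintype κ]

theorem exists_vecMul_eq_smul_of_mem_spectrum {K : Type*} [Field K] {A : Matrix ι ι K} {μ : K}
    (h : μ ∈ spectrum K A) : ∃ v ≠ 0, v ᵥ* A = μ • v := by
  rw [spectrum.mem_iff, isUnit_iff_isUnit_det, isUnit_iff_ne_zero, not_not,
    ← exists_vecMul_eq_zero_iff] at h
  obtain ⟨v, hv0, hv⟩ := h
  refine ⟨v, hv0, ?_⟩
  rw [vecMul_sub, Algebra.algebraMap_eq_smul_one, vecMul_smul, vecMul_one, sub_eq_zero] at hv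
  exact hv.symm

variable [CommRing R]

theorem vecMul_aeval_of_vecMul_eq_smul {A : Matrix ι ι R} {v : ι → R} {μ : R}
    (hv : v ᵥ* A = μ • v) (p : R[X]) : v ᵥ* aeval A p = p.eval μ • v := by
  have hpow : ∀ k : ℕ, v ᵥ* A ^ k = μ ^ k • v := by
    intro k
    induction k with
    | zero => simp
    | succ k ih => rw [pow_succ, ← vecMul_vecMul, ih, smul_vecMul, hv, smul_smul, pow_succ]
  induction p using Polynomial.induction_on' with
  | add p q hp hq => simp only [map_add, vecMul_add, hp, hq, eval_add, add_smul]
  | monomial k a =>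
    rw [aeval_monomial, ← Algebra.smul_def, vecMul_smul, hpow, eval_monomial, smul_smul]

theorem aeval_mulVec_mem_span_pow_mulVec (A : Matrix ι ι R) (p : R[X]) (b : ι → R) :
    aeval A p *ᵥ b ∈ Submodule.span R
      ((fun k : ℕ => (A ^ k) *ᵥ b) '' Set.Iio (Fintype.card ι)) := by
  cases subsingleton_or_nontrivial (ι → R)
  · rw [Subsingleton.elim (aeval A p *ᵥ b) 0]
    exact zero_mem _
  obtain ⟨x, y, hxy⟩ := exists_pair_ne (ι → R)
  obtain ⟨i, hi⟩ := Function.ne_iff.mp hxy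
  have : Nonempty ι := ⟨i⟩
  have : Nontrivial R := ⟨⟨_, _, hi⟩⟩
  have hdeg : (p %ₘ A.charpoly).natDegree < Fintype.card ι := by
    refine A.charpoly_natDegree_eq_dim ▸ natDegree_modByMonic_lt p A.charpoly_monic fun h => ?_
    have := A.charpoly_natDegree_eq_dim
    rw [h, natDegree_one] at this
    exact Fintype.card_ne_zero this.symm
  rw [aeval_eq_aeval_mod_charpoly, aeval_eq_sum_range' hdeg, sum_mulVec]
  refine Submodule.sum_mem _ fun k hk => ?_
  rw [smul_mulVec]
  exact Submodule.smul_mem _ _ (Submodule.subset_span ⟨k, Finset.mem_range.mp hk, rfl⟩)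

theorem exists_dotProduct_eq {K : Type*} [Field K] {v : ι → K} (hv : v ≠ 0) (c : K) :
    ∃ y, v ⬝ᵥ y = c := by
  obtain ⟨k, hk⟩ := Function.ne_iff.mp hv
  exact ⟨Pi.single k (c / v k), by rw [dotProduct_single, mul_div_cancel₀ _ hk]⟩

noncomputable def reachMap (A : Matrix ι ι R) (B : Matrix ι κ R) : (κ → R[X]) →ₗ[R] (ι → R) where
  toFun p := ∑ j, aeval A (p j) *ᵥ fun i => B i j
  map_add' p q := by simp only [Pi.add_apply, map_add, add_mulVec, Finset.sum_add_distrib]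
  map_smul' c p := by
    simp only [Pi.smul_apply, map_smul, smul_mulVec, Finset.smul_sum, RingHom.id_apply]

theorem reachMap_apply (A : Matrix ι ι R) (B : Matrix ι κ R) (p : κ → R[X]) :
    reachMap A B p = ∑ j, aeval A (p j) *ᵥ fun i => B i j :=
  rfl

theorem dotProduct_reachMap {A : Matrix ι ι R} {v : ι → R} {μ : R} (hv : v ᵥ* A = μ • v)
    (B : Matrix ι κ R) (p : κ → R[X]) :
    v ⬝ᵥ reachMap A B p = (v ᵥ* B) ⬝ᵥ fun j => (p j).eval μ := by
  simp only [reachMap_apply, dotProduct_sum, dotProduct_mulVec, vecMul_aeval_of_vecMul_eq_smul hv]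
  refine Finset.sum_congr rfl fun j _ => ?_
  rw [smul_dotProduct, smul_eq_mul, mul_comm]
  rfl

noncomputable def kalmanMatrix {n : ℕ} (A : Matrix (Fin n) (Fin n) R) (B : Matrix (Fin n) κ R) :
    Matrix (Fin n) (Fin n × κ) R :=
  of fun i kj => ((A ^ (kj.1 : ℕ)) *ᵥ fun i' => B i' kj.2) i

theorem range_reachMap_le_range_kalmanMatrix {n : ℕ} (A : Matrix (Fin n) (Fin n) R)
    (B : Matrix (Fin n) κ R) :
    LinearMap.range (reachMap A B) ≤ LinearMap.range (kalmanMatrix A B).mulVecLin := by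
  rintro - ⟨p, rfl⟩
  rw [range_mulVecLin]
  refine Submodule.sum_mem _ fun j _ =>
    Submodule.span_mono ?_ (aeval_mulVec_mem_span_pow_mulVec A (p j) _)
  rintro - ⟨k, hk, rfl⟩
  exact ⟨(⟨k, by simpa using hk⟩, j), rfl⟩

theorem rank_kalmanMatrix_of_surjective {K : Type*} [Field K] {n : ℕ}
    {A : Matrix (Fin n) (Fin n) K} {B : Matrix (Fin n) κ K}
    (h : Function.Surjective (reachMap A B)) : (kalmanMatrix A B).rank = n := by
  have htop : LinearMap.range (kalmanMatrix A B).mulVecLin = ⊤ :=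
    top_le_iff.mp (LinearMap.range_eq_top.mpr h ▸ range_reachMap_le_range_kalmanMatrix A B)
  rw [rank, htop, finrank_top, Module.finrank_fin_fun]

theorem card_le_of_surjective_pi_reachMap {σ K : Type*} [Fintype σ] [Field K]
    {A : σ → Matrix ι ι K} {B : σ → Matrix ι κ K} {μ : K} (hμ : ∀ i, μ ∈ spectrum K (A i))
    (h : Function.Surjective (LinearMap.pi fun i => reachMap (A i) (B i))) :
    Fintype.card σ ≤ Fintype.card κ := by
  choose v hv0 hv using fun i => exists_vecMul_eq_smul_of_mem_spectrum (hμ i)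
  let M : Matrix σ κ K := of fun i => v i ᵥ* B i
  have hM : Function.Surjective M.mulVecLin := by
    intro c
    choose y hy using fun i => exists_dotProduct_eq (hv0 i) (c i)
    obtain ⟨p, hp⟩ := h y
    refine ⟨fun j => (p j).eval μ, funext fun i => ?_⟩
    rw [← hy i, ← congrFun hp i, LinearMap.pi_apply, dotProduct_reachMap (hv i)]
    rfl
  calc Fintype.card σ = M.rank := by
        rw [rank, LinearMap.range_eq_top.mpr hM, finrank_top, Module.finrank_fintype_fun_eq_card]
    _ ≤ Fintype.card κ := M.rank_le_card_width

end Matrix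

theorem exists_continuous_interpolation {𝕜 σ E : Type*} [Field 𝕜] [TopologicalSpace 𝕜]
    [IsTopologicalRing 𝕜] [Fintype σ] [TopologicalSpace E] [AddCommMonoid E] [Module 𝕜 E]
    [ContinuousAdd E] [ContinuousSMul 𝕜 E] {x : σ → 𝕜} (hx : Function.Injective x)
    (y : σ → E) : ∃ g : 𝕜 → E, Continuous g ∧ ∀ i, g (x i) = y i := by
  classical
  refine ⟨fun t => ∑ i, (Lagrange.basis Finset.univ x i).eval t • y i, by fun_prop, fun k => ?_⟩
  dsimp only
  rw [Finset.sum_eq_single k (fun i _ hik => by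
      rw [Lagrange.eval_basis_of_ne hik (Finset.mem_univ k), zero_smul]) (by simp),
    Lagrange.eval_basis_self hx.injOn (Finset.mem_univ k), one_smul]

section Reachability

variable {ι κ : Type*} [Fintype ι] [DecidableEq ι] [Fintype κ] {P : Set ℂ}
  {A : P → Matrix ι ι ℂ} {B : P → Matrix ι κ ℂ}

theorem UniformEnsembleReachable.surjective_pi_reachMap {σ : Type*} [Fintype σ]
    (hUER : UniformEnsembleReachable P A B) {θ : σ → P} (hθ : Function.Injective θ) :
    Function.Surjective (LinearMap.pi fun i => reachMap (A (θ i)) (B (θ i))) := by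
  set R := LinearMap.pi fun i => reachMap (A (θ i)) (B (θ i))
  rw [← LinearMap.range_eq_top, eq_top_iff]
  intro y _
  rw [← SetLike.mem_coe, ← (LinearMap.range R).closed_of_finiteDimensional.closure_eq,
    Metric.mem_closure_iff]
  intro ε hε
  obtain ⟨g, hg, hgθ⟩ := exists_continuous_interpolation (Subtype.val_injective.comp hθ) y
  obtain ⟨p, hp⟩ := hUER (g ∘ Subtype.val) (hg.comp continuous_subtype_val) ε hε
  refine ⟨R p, ⟨p, rfl⟩, ?_⟩
  rw [dist_comm, dist_eq_norm, pi_norm_lt_iff hε]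
  intro i
  rw [Pi.sub_apply, ← hgθ i]
  exact hp (θ i)

theorem UniformEnsembleReachable.surjective_reachMap (hUER : UniformEnsembleReachable P A B)
    (θ : P) : Function.Surjective (reachMap (A θ) (B θ)) := fun y =>
  let ⟨p, hp⟩ :=
    hUER.surjective_pi_reachMap (Function.injective_of_subsingleton fun _ : Unit => θ) fun _ => y
  ⟨p, congrFun hp ()⟩

end Reachability

theorem stmt_12_general {n m : ℕ} (P : Set ℂ)
    (A : P → Matrix (Fin n) (Fin n) ℂ) (B : P → Matrix (Fin n) (Fin m) ℂ)
    (hUER : UniformEnsembleReachable P A B) :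
    (∀ θ : P,
      (Matrix.of fun (i : Fin n) (kj : Fin n × Fin m) =>
        ((A θ ^ (kj.1 : ℕ)).mulVec fun i' => B θ i' kj.2) i).rank = n) ∧
    (∀ s : ℕ, m + 1 ≤ s → ∀ θ : Fin s → P, Function.Injective θ →
      (⋂ i : Fin s, spectrum ℂ (A (θ i))) = ∅) := by
  refine ⟨fun θ => rank_kalmanMatrix_of_surjective (hUER.surjective_reachMap θ),
    fun s hs θ hθ => ?_⟩
  by_contra hne
  obtain ⟨μ, hμ⟩ := Set.nonempty_iff_ne_empty.mpr hne
  have hcard := card_le_of_surjective_pi_reachMap (Set.mem_iInter.mp hμ)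
    (hUER.surjective_pi_reachMap hθ)
  rw [Fintype.card_fin, Fintype.card_fin] at hcard
  omega

/-- necessary conditions for uniform ensemble reachability of a multi-input
pair `(A, B)`: (a) pointwise Kalman rank condition; (b) for any `s ≥ m + 1` pairwise
distinct parameters the intersection of the corresponding spectra is empty. -/
theorem stmt_12 {n m : ℕ} (P : Set ℂ) (hP : IsCompact P)
    (A : P → Matrix (Fin n) (Fin n) ℂ) (B : P → Matrix (Fin n) (Fin m) ℂ)
    (hA : Continuous A) (hB : Continuous B)
    (hUER : UniformEnsembleReachable P A B) :
    (∀ θ : P,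
      (Matrix.of fun (i : Fin n) (kj : Fin n × Fin m) =>
        ((A θ ^ (kj.1 : ℕ)).mulVec fun i' => B θ i' kj.2) i).rank = n) ∧
    (∀ s : ℕ, m + 1 ≤ s → ∀ θ : Fin s → P, Function.Injective θ →
      (⋂ i : Fin s, spectrum ℂ (A (θ i))) = ∅) :=
  stmt_12_general P A B hUER
end

section
/- Let P ⊆ ℂ be compact, equipped with the restriction of Lebesgue measure, and let R : P → ℂ^{n×m} be Lebesgue measurable. Then there exists a bounded Lebesgue-measurable function α : P → ℂ^m such that for almost every θ ∈ P: R(θ) α(θ) = 0, and moreover ‖α(θ)‖ = 1 whenever ker R(θ) ≠ {0}. -/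
/-!
A unit kernel vector is chosen from a countable family of candidates, each depending continuously
on the matrix `A`: the columns of `adjugate (Aᴴ * A)`, followed recursively by the candidates for
`A` with its first column deleted, padded by a leading zero. If `ker A ≠ 0` then `Aᴴ * A` is
singular, so `(Aᴴ * A) * adjugate (Aᴴ * A) = 0` and every column of the adjugate lies in
`ker (Aᴴ * A) = ker A`. If all these columns vanish, the `(0, 0)` entry of the adjugate is the Gram
determinant of `A` with its first column deleted, which therefore has a nontrivial kernel too.
Taking the first candidate that is a nonzero kernel vector and normalizing it is a measurable
operation.
-/

open Matrix MeasureTheory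

noncomputable def lebesgueOn (P : Set ℂ) : Measure P :=
  Measure.comap Subtype.val volume

theorem Measurable.dite_exists_find {α β : Type*} [MeasurableSpace α] [MeasurableSpace β]
    {f : ℕ → α → β} {p : ℕ → α → Prop} [∀ k, DecidablePred (p k)]
    [DecidablePred fun x => ∃ k, p k x] (hf : ∀ k, Measurable (f k))
    (hp : ∀ k, MeasurableSet {x | p k x}) {g : α → β} (hg : Measurable g) :
    Measurable fun x => if h : ∃ k, p k x then f (Nat.find h) x else g x := by
  classical
  set T := {x | ∃ k, p k x}
  have hT : MeasurableSet T := by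
    simp only [T, Set.ofPred_exists]
    exact MeasurableSet.iUnion hp
  have hT' (x : α) : ∃ k, p k x ∨ x ∉ T :=
    (em (x ∈ T)).elim (fun ⟨k, hk⟩ => ⟨k, Or.inl hk⟩) fun hx => ⟨0, Or.inr hx⟩
  have key : Measurable fun x => if x ∈ T then f (Nat.find (hT' x)) x else g x :=
    (Measurable.find (p := fun k x => p k x ∨ x ∉ T) hf (fun k => (hp k).union hT.compl)
      hT').ite hT hg
  convert key using 2 with x
  by_cases hx : ∃ k, p k x
  · rw [dif_pos hx, if_pos (show x ∈ T from hx)]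
    exact congrArg (f · x) (Nat.find_congr' (or_iff_left (not_not_intro hx)).symm)
  · rw [dif_neg hx, if_neg (show x ∉ T from hx)]

namespace Matrix

instance instMeasurableSpace {m n α : Type*} [MeasurableSpace α] :
    MeasurableSpace (Matrix m n α) :=
  inferInstanceAs (MeasurableSpace (m → n → α))

instance instBorelSpace {m n α : Type*} [Countable m] [Countable n] [TopologicalSpace α]
    [MeasurableSpace α] [SecondCountableTopology α] [BorelSpace α] :
    BorelSpace (Matrix m n α) :=
  inferInstanceAs (BorelSpace (m → n → α))

theorem mulVec_vecCons_zero {R n : Type*} [CommRing R] {m : ℕ} (A : Matrix n (Fin (m + 1)) R)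
    (w : Fin m → R) : A *ᵥ vecCons 0 w = A.submatrix id Fin.succ *ᵥ w := by
  ext i
  simp [mulVec, dotProduct, Fin.sum_univ_succ]

theorem adjugate_fin_succ_zero_zero {R : Type*} [CommRing R] {m : ℕ}
    (A : Matrix (Fin (m + 1)) (Fin (m + 1)) R) :
    adjugate A 0 0 = det (A.submatrix Fin.succ Fin.succ) := by
  simpa using adjugate_fin_succ_eq_det_submatrix A 0 0

section KernelCandidates

variable {n : Type*} [Fintype n]

noncomputable def kerCandidate {R : Type*} [CommRing R] [StarRing R] :
    {m : ℕ} → Matrix n (Fin m) R → ℕ → Fin m → R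
  | 0, _, _ => 0
  | m + 1, A, k =>
    if h : k < m + 1 then fun i => adjugate (Aᴴ * A) i ⟨k, h⟩
    else vecCons 0 (kerCandidate (A.submatrix id Fin.succ) (k - (m + 1)))

theorem continuous_kerCandidate {R : Type*} [CommRing R] [StarRing R] [TopologicalSpace R]
    [IsTopologicalRing R] [ContinuousStar R] {m : ℕ} (k : ℕ) :
    Continuous fun A : Matrix n (Fin m) R => kerCandidate A k := by
  induction m generalizing k with
  | zero => exact continuous_const
  | succ m ih =>
    by_cases h : k < m + 1
    · simp only [kerCandidate, dif_pos h]
      exact continuous_pi fun i => (continuous_id.matrix_conjTranspose.matrix_mul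
        continuous_id).matrix_adjugate.matrix_elem i _
    · simp only [kerCandidate, dif_neg h]
      exact continuous_const.finCons ((ih _).comp (continuous_id.matrix_submatrix _ _))

variable {K : Type*} [Field K] [StarRing K] [PartialOrder K] [StarOrderedRing K]

theorem det_conjTranspose_mul_self_eq_zero_iff {m : Type*} [Fintype m] [DecidableEq m]
    (A : Matrix n m K) : (Aᴴ * A).det = 0 ↔ ∃ v ≠ 0, A *ᵥ v = 0 := by
  simp only [← exists_mulVec_eq_zero_iff, conjTranspose_mul_self_mulVec_eq_zero]

theorem exists_kerCandidate {m : ℕ} (A : Matrix n (Fin m) K) (hA : ∃ v ≠ 0, A *ᵥ v = 0) :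
    ∃ k, kerCandidate A k ≠ 0 ∧ A *ᵥ kerCandidate A k = 0 := by
  induction m with
  | zero =>
    obtain ⟨v, hv, -⟩ := hA
    exact absurd (Subsingleton.elim v 0) hv
  | succ m ih =>
    set G := Aᴴ * A
    have hG : G.det = 0 := (det_conjTranspose_mul_self_eq_zero_iff A).2 hA
    by_cases hadj : adjugate G = 0
    · set A' := A.submatrix id Fin.succ
      have hA' : (A'ᴴ * A').det = 0 := by
        rw [conjTranspose_submatrix, ← submatrix_mul _ _ _ _ _ Function.bijective_id,
          ← adjugate_fin_succ_zero_zero, hadj, zero_apply]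
      obtain ⟨k, hk, hAk⟩ := ih A' ((det_conjTranspose_mul_self_eq_zero_iff A').1 hA')
      refine ⟨k + (m + 1), ?_, ?_⟩ <;>
        simp only [kerCandidate, dif_neg (Nat.not_lt.2 (Nat.le_add_left _ k)), Nat.add_sub_cancel]
      · exact fun h => hk (cons_eq_zero_iff.1 h).2
      · rw [mulVec_vecCons_zero, hAk]
    · obtain ⟨i, k, hik⟩ : ∃ i k, adjugate G i k ≠ 0 := by
        by_contra! h
        exact hadj (Matrix.ext h)
      have hcol : kerCandidate A k = fun i => adjugate G i k := by
        simp only [kerCandidate, dif_pos k.isLt, Fin.eta, G]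
      refine ⟨k, hcol ▸ fun h => hik (congrFun h i), ?_⟩
      have hGadj : G * adjugate G = 0 := by rw [mul_adjugate, hG, zero_smul]
      rw [hcol, ← conjTranspose_mul_self_mulVec_eq_zero]
      exact funext fun j => congrFun₂ hGadj j k

end KernelCandidates

section UnitKernelVector

variable {𝕜 : Type*} [RCLike 𝕜] {n : Type*} [Fintype n] {m : ℕ}

open Classical in
noncomputable def unitKerVec (A : Matrix n (Fin m) 𝕜) : Fin m → 𝕜 :=
  if h : ∃ k, kerCandidate A k ≠ 0 ∧ A *ᵥ kerCandidate A k = 0 then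
    (‖kerCandidate A (Nat.find h)‖⁻¹ : 𝕜) • kerCandidate A (Nat.find h)
  else 0

theorem mulVec_unitKerVec (A : Matrix n (Fin m) 𝕜) : A *ᵥ unitKerVec A = 0 := by
  unfold unitKerVec
  split_ifs with h
  · rw [mulVec_smul, (Nat.find_spec h).2, smul_zero]
  · exact mulVec_zero A

theorem norm_unitKerVec_le_one (A : Matrix n (Fin m) 𝕜) : ‖unitKerVec A‖ ≤ 1 := by
  unfold unitKerVec
  split_ifs with h
  · exact (norm_smul_inv_norm (Nat.find_spec h).1).le
  · simp

open scoped ComplexOrder in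
theorem norm_unitKerVec {A : Matrix n (Fin m) 𝕜} (hA : LinearMap.ker (toLin' A) ≠ ⊥) :
    ‖unitKerVec A‖ = 1 := by
  obtain ⟨v, hv, hv0⟩ := (Submodule.ne_bot_iff _).1 hA
  have h := exists_kerCandidate A ⟨v, hv0, hv⟩
  rw [unitKerVec, dif_pos h]
  exact norm_smul_inv_norm (Nat.find_spec h).1

theorem measurable_unitKerVec : Measurable (unitKerVec : Matrix n (Fin m) 𝕜 → Fin m → 𝕜) := by
  have hcont (k : ℕ) : Continuous fun A : Matrix n (Fin m) 𝕜 => kerCandidate A k :=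
    continuous_kerCandidate k
  have hcand (k : ℕ) : Measurable fun A : Matrix n (Fin m) 𝕜 => kerCandidate A k :=
    (hcont k).measurable
  classical
  unfold unitKerVec
  refine Measurable.dite_exists_find
    (f := fun k A => (‖kerCandidate A k‖⁻¹ : 𝕜) • kerCandidate A k)
    (p := fun k A => kerCandidate A k ≠ 0 ∧ A *ᵥ kerCandidate A k = 0)
    (fun k => ?_) (fun k => ?_) measurable_const
  · exact ((RCLike.measurable_ofReal (𝕜 := 𝕜)).comp (hcand k).norm).inv.smul (hcand k)
  · exact (measurableSet_eq_fun (hcand k) measurable_const).compl.inter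
      (measurableSet_eq_fun ((continuous_id.matrix_mulVec (hcont k)).measurable)
        measurable_const)

end UnitKernelVector

end Matrix

theorem stmt_15_general {n m : ℕ} (P : Set ℂ)
    (R : P → Matrix (Fin n) (Fin m) ℂ)
    (hR : ∀ (i : Fin n) (j : Fin m), Measurable fun θ : P => R θ i j) :
    ∃ α : P → Fin m → ℂ, Measurable α ∧ (∃ C : ℝ, ∀ θ : P, ‖α θ‖ ≤ C) ∧
      ∀ᵐ θ ∂(lebesgueOn P),
        (R θ).mulVec (α θ) = 0 ∧
        (LinearMap.ker (Matrix.toLin' (R θ)) ≠ ⊥ → ‖α θ‖ = 1) := by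
  have hRmeas : Measurable fun θ : P => R θ :=
    measurable_pi_lambda _ fun i => measurable_pi_lambda _ (hR i)
  exact ⟨fun θ => unitKerVec (R θ), measurable_unitKerVec.comp hRmeas,
    ⟨1, fun θ => norm_unitKerVec_le_one _⟩,
    ae_of_all _ fun θ => ⟨mulVec_unitKerVec _, norm_unitKerVec⟩⟩

/-- measurable selection lemma.  For a Lebesgue measurable matrix-valued
function `R` on a compact set `P ⊆ ℂ` there is a bounded measurable function
`α : P → ℂ^m` such that almost everywhere `R(θ) α(θ) = 0` and `‖α(θ)‖ = 1` whenever the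
kernel of `R(θ)` is nontrivial. -/
theorem stmt_15 {n m : ℕ} (P : Set ℂ) (hP : IsCompact P)
    (R : P → Matrix (Fin n) (Fin m) ℂ)
    (hR : ∀ (i : Fin n) (j : Fin m), Measurable fun θ : P => R θ i j) :
    ∃ α : P → Fin m → ℂ, Measurable α ∧ (∃ C : ℝ, ∀ θ : P, ‖α θ‖ ≤ C) ∧
      ∀ᵐ θ ∂(lebesgueOn P),
        (R θ).mulVec (α θ) = 0 ∧
        (LinearMap.ker (Matrix.toLin' (R θ)) ≠ ⊥ → ‖α θ‖ = 1) :=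
  stmt_15_general P R hR
end

section
/- Let P ⊆ ℂ be compact, equipped with the restriction of Lebesgue measure, let 1 ≤ q < ∞, let A : P → ℂ^{n×n} be continuous, and let B : P → ℂ^{n×m} have columns b_1, …, b_m in L^q(P, ℂ^n). If the pair (A, B) is L^q-ensemble reachable, then for almost every θ ∈ P: (a) the Kalman matrix (B(θ), A(θ)B(θ), …, A(θ)^{n−1}B(θ)) has rank n; and (b) every eigenvalue λ of A(θ) satisfies dim ker(λI − A(θ)) ≤ m, i.e. has geometric multiplicity at most m (in particular geometric multiplicity one when m = 1). -/
open Polynomial Matrix MeasureTheory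

/-- `L^q`-ensemble reachability of a pair `(A, B)`: the span of the functions
`θ ↦ A(θ)^k b_j(θ)` is dense in `L^q(P, ℂ^n)`, expressed via approximation by
`∑_j p_j(A(θ)) b_j(θ)` with polynomials `p_j` in the `L^q`-norm. -/
def LqEnsembleReachable {n m : ℕ} (P : Set ℂ) (q : ℝ)
    (A : P → Matrix (Fin n) (Fin n) ℂ) (B : P → Matrix (Fin n) (Fin m) ℂ) : Prop :=
  ∀ f : P → Fin n → ℂ, MemLp f (ENNReal.ofReal q) (lebesgueOn P) →
    ∀ ε : ℝ, 0 < ε → ∃ p : Fin m → Polynomial ℂ,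
      eLpNorm
        (fun θ => (∑ j : Fin m, (Polynomial.aeval (A θ) (p j)).mulVec fun i => B θ i j) - f θ)
        (ENNReal.ofReal q) (lebesgueOn P) < ENNReal.ofReal ε

/-!
Reachability lets one approximate any constant vector `v` in `L^q` by the functions
`θ ↦ ∑ⱼ pⱼ(A θ) bⱼ(θ)`, which by Cayley–Hamilton take their values in the range of the Kalman
matrix of `(A θ, B θ)`. A subsequence converges almost everywhere and these ranges are closed,
so `v` lies in almost every Kalman range; taking `v` in a basis gives rank `n` almost everywhere.

For the eigenvalue bound (the Hautus test), `range (λ - A) + range B` is `A`-invariant and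
contains the columns of `B`, hence is everything when the Kalman matrix has full rank, so
`n ≤ rank (λ - A) + m`.
-/

open Module Filter Topology

section InvariantSubspace

variable {K V : Type*} [Field K] [AddCommGroup V] [Module K V] [FiniteDimensional K V]

theorem finrank_ker_smul_one_sub_le {f : Module.End K V} {S : Submodule K V}
    (hS : ∀ W : Submodule K V, S ≤ W → (∀ w ∈ W, f w ∈ W) → W = ⊤) (μ : K) :
    finrank K (LinearMap.ker (μ • 1 - f)) ≤ finrank K S := by
  set N : Module.End K V := μ • 1 - f
  -- `f = μ - N`, so `range N ⊔ S` is `f`-invariant.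
  have hsup : LinearMap.range N ⊔ S = ⊤ := by
    refine hS _ le_sup_right fun w hw => ?_
    have hf : f w = μ • w - N w := by simp [N]
    rw [hf]
    exact sub_mem (Submodule.smul_mem _ _ hw)
      (Submodule.mem_sup_left (LinearMap.mem_range_self N w))
  have hle := Submodule.finrank_add_le_finrank_add_finrank (LinearMap.range N) S
  rw [hsup, finrank_top] at hle
  have := LinearMap.finrank_range_add_finrank_ker N
  omega

end InvariantSubspace

namespace Matrix

section Kalman

variable {R : Type*} [CommRing R] {n m : ℕ}

/-- The Kalman matrix `(B, AB, …, A^{n-1}B)`. -/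
def kalman (A : Matrix (Fin n) (Fin n) R) (B : Matrix (Fin n) (Fin m) R) :
    Matrix (Fin n) (Fin n × Fin m) R :=
  of fun i kj => ((A ^ (kj.1 : ℕ)).mulVec fun i' => B i' kj.2) i

theorem aeval_mulVec_mem_span_pow [Nontrivial R] (A : Matrix (Fin n) (Fin n) R) (p : R[X])
    (v : Fin n → R) :
    aeval A p *ᵥ v ∈ Submodule.span R (Set.range fun k : Fin n => A ^ (k : ℕ) *ᵥ v) := by
  set r := p %ₘ A.charpoly
  have hr : r.degree < n := by
    simpa [A.charpoly_degree_eq_dim] using degree_modByMonic_lt p A.charpoly_monic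
  rw [aeval_eq_aeval_mod_charpoly, aeval_eq_sum_range, sum_mulVec]
  refine Submodule.sum_mem _ fun i _ => ?_
  rw [smul_mulVec]
  by_cases hi : i < n
  · exact Submodule.smul_mem _ _ (Submodule.subset_span ⟨⟨i, hi⟩, rfl⟩)
  · rw [coeff_eq_zero_of_degree_lt (hr.trans_le (by exact_mod_cast not_lt.mp hi)), zero_smul]
    exact Submodule.zero_mem _

theorem sum_aeval_mulVec_mem_range_kalman [Nontrivial R] (A : Matrix (Fin n) (Fin n) R)
    (B : Matrix (Fin n) (Fin m) R) (p : Fin m → R[X]) :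
    (∑ j, aeval A (p j) *ᵥ fun i => B i j) ∈ LinearMap.range (kalman A B).mulVecLin := by
  rw [range_mulVecLin]
  refine Submodule.sum_mem _ fun j _ => ?_
  refine Submodule.span_mono ?_ (aeval_mulVec_mem_span_pow A (p j) _)
  rintro _ ⟨k, rfl⟩
  exact ⟨(k, j), rfl⟩

end Kalman

section Hautus

variable {K : Type*} [Field K] {n m : ℕ}

theorem finrank_ker_smul_one_sub_le_of_range_kalman_eq_top {A : Matrix (Fin n) (Fin n) K}
    {B : Matrix (Fin n) (Fin m) K} (hAB : LinearMap.range (kalman A B).mulVecLin = ⊤) (μ : K) :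
    finrank K (LinearMap.ker (toLin' (μ • 1 - A))) ≤ m := by
  have hS : ∀ W : Submodule K (Fin n → K), LinearMap.range (toLin' B) ≤ W →
      (∀ w ∈ W, toLin' A w ∈ W) → W = ⊤ := by
    intro W hBW hAW
    rw [eq_top_iff, ← hAB, range_mulVecLin, Submodule.span_le]
    rintro _ ⟨⟨k, j⟩, rfl⟩
    change A ^ (k : ℕ) *ᵥ (fun i => B i j) ∈ W
    have hb : (fun i => B i j) ∈ W := hBW ⟨Pi.single j 1, by ext; simp [toLin'_apply']⟩
    have := Module.End.pow_apply_mem_of_forall_mem k hAW _ hb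
    rwa [← toLin'_pow, toLin'_apply', mulVecLin_apply] at this
  calc finrank K (LinearMap.ker (toLin' (μ • 1 - A)))
      = finrank K (LinearMap.ker (μ • 1 - toLin' A)) := by
        rw [map_sub, map_smul, toLin'_one, Module.End.one_eq_id]
    _ ≤ finrank K (LinearMap.range (toLin' B)) := finrank_ker_smul_one_sub_le hS μ
    _ ≤ m := by rw [toLin'_apply']; exact B.rank_le_width

end Hautus

end Matrix

namespace MeasureTheory

theorem ae_mem_of_tendsto_eLpNorm {α E : Type*} [MeasurableSpace α] {μ : Measure α}
    [NormedAddCommGroup E] {p : ENNReal} (hp : p ≠ 0) {g : ℕ → α → E} {f : α → E}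
    (hg : ∀ k, AEStronglyMeasurable (g k) μ) (hf : AEStronglyMeasurable f μ)
    (hlim : Tendsto (fun k => eLpNorm (g k - f) p μ) atTop (𝓝 0)) {C : α → Set E}
    (hC : ∀ a, IsClosed (C a)) (hgC : ∀ k a, g k a ∈ C a) : ∀ᵐ a ∂μ, f a ∈ C a := by
  obtain ⟨ns, -, hae⟩ :=
    (tendstoInMeasure_of_tendsto_eLpNorm hp hg hf hlim).exists_seq_tendsto_ae
  filter_upwards [hae] with a ha
  exact (hC a).mem_of_tendsto ha (Eventually.of_forall fun k => hgC _ a)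

theorem aestronglyMeasurable_aeval_mulVec {α 𝕜 : Type*} [MeasurableSpace α] [TopologicalSpace α]
    [OpensMeasurableSpace α] [SecondCountableTopology α] {μ : Measure α} [RCLike 𝕜] {n : ℕ}
    {A : α → Matrix (Fin n) (Fin n) 𝕜} (hA : Continuous A) {b : α → Fin n → 𝕜}
    (hb : AEStronglyMeasurable b μ) (p : 𝕜[X]) :
    AEStronglyMeasurable (fun a => aeval (A a) p *ᵥ b a) μ := by
  let : TopologicalSpace.PseudoMetrizableSpace (Matrix (Fin n) (Fin n) 𝕜) :=
    inferInstanceAs (TopologicalSpace.PseudoMetrizableSpace (Fin n → Fin n → 𝕜))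
  have hAp : AEStronglyMeasurable (fun a => aeval (A a) p) μ :=
    ((Polynomial.continuous_aeval p).comp hA).aestronglyMeasurable
  exact (continuous_fst.matrix_mulVec continuous_snd).comp_aestronglyMeasurable (hAp.prodMk hb)

theorem isFiniteMeasure_lebesgueOn {P : Set ℂ} (hP : IsCompact P) :
    IsFiniteMeasure (lebesgueOn P) where
  measure_univ_lt_top := by
    rw [lebesgueOn, (MeasurableEmbedding.subtype_coe hP.isClosed.measurableSet).comap_apply,
      Set.image_univ, Subtype.range_coe]
    exact hP.measure_lt_top

end MeasureTheory

open MeasureTheory Matrix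

namespace LqEnsembleReachable

variable {n m : ℕ} {P : Set ℂ} {q : ℝ} {A : P → Matrix (Fin n) (Fin n) ℂ}
  {B : P → Matrix (Fin n) (Fin m) ℂ}

theorem ae_mem_range_kalman (hLq : LqEnsembleReachable P q A B) (hP : IsCompact P) (hq : 0 < q)
    (hA : Continuous A)
    (hB : ∀ j, MemLp (fun θ : P => fun i => B θ i j) (ENNReal.ofReal q) (lebesgueOn P))
    (v : Fin n → ℂ) :
    ∀ᵐ θ ∂lebesgueOn P, v ∈ LinearMap.range (kalman (A θ) (B θ)).mulVecLin := by
  have := isFiniteMeasure_lebesgueOn hP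
  choose p hp using fun k : ℕ =>
    hLq (fun _ => v) (memLp_const v) (1 / (k + 1)) Nat.one_div_pos_of_nat
  have hlim : Tendsto (fun k : ℕ => ENNReal.ofReal (1 / (k + 1))) atTop (𝓝 0) := by
    simpa using ENNReal.tendsto_ofReal tendsto_one_div_add_atTop_nhds_zero_nat
  refine ae_mem_of_tendsto_eLpNorm (ENNReal.ofReal_pos.2 hq).ne'
    (g := fun k θ => ∑ j, aeval (A θ) (p k j) *ᵥ fun i => B θ i j)
    (fun k => Finset.aestronglyMeasurable_fun_sum _ fun j _ =>
      aestronglyMeasurable_aeval_mulVec hA (hB j).1 _)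
    aestronglyMeasurable_const
    (tendsto_of_tendsto_of_tendsto_of_le_of_le tendsto_const_nhds hlim (fun _ => zero_le)
      fun k => (hp k).le)
    (fun θ => Submodule.closed_of_finiteDimensional _)
    fun k θ => sum_aeval_mulVec_mem_range_kalman _ _ _

theorem ae_range_kalman_eq_top (hLq : LqEnsembleReachable P q A B) (hP : IsCompact P) (hq : 0 < q)
    (hA : Continuous A)
    (hB : ∀ j, MemLp (fun θ : P => fun i => B θ i j) (ENNReal.ofReal q) (lebesgueOn P)) :
    ∀ᵐ θ ∂lebesgueOn P, LinearMap.range (kalman (A θ) (B θ)).mulVecLin = ⊤ := by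
  have hbasis := ae_all_iff.2 fun i =>
    hLq.ae_mem_range_kalman hP hq hA hB (Pi.basisFun ℂ (Fin n) i)
  filter_upwards [hbasis] with θ hθ
  rw [eq_top_iff, ← (Pi.basisFun ℂ (Fin n)).span_eq, Submodule.span_le]
  rintro _ ⟨i, rfl⟩
  exact hθ i

end LqEnsembleReachable

/-- necessary conditions for `L^q`-ensemble reachability: for almost every
`θ ∈ P` the Kalman matrix of `(A(θ), B(θ))` has rank `n` and every eigenvalue of `A(θ)`
has geometric multiplicity at most `m`. -/
theorem stmt_16 {n m : ℕ} (P : Set ℂ) (hP : IsCompact P) (q : ℝ) (hq : 1 ≤ q)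
    (A : P → Matrix (Fin n) (Fin n) ℂ) (hA : Continuous A)
    (B : P → Matrix (Fin n) (Fin m) ℂ)
    (hB : ∀ j : Fin m, MemLp (fun θ : P => fun i => B θ i j)
      (ENNReal.ofReal q) (lebesgueOn P))
    (hLq : LqEnsembleReachable P q A B) :
    ∀ᵐ θ ∂(lebesgueOn P),
      ((Matrix.of fun (i : Fin n) (kj : Fin n × Fin m) =>
        ((A θ ^ (kj.1 : ℕ)).mulVec fun i' => B θ i' kj.2) i).rank = n) ∧
      ∀ μ ∈ spectrum ℂ (A θ),
        Module.finrank ℂ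
          (LinearMap.ker (Matrix.toLin' (μ • (1 : Matrix (Fin n) (Fin n) ℂ) - A θ))) ≤ m := by
  filter_upwards [hLq.ae_range_kalman_eq_top hP (by linarith) hA hB] with θ hθ
  refine ⟨?_, fun μ _ => finrank_ker_smul_one_sub_le_of_range_kalman_eq_top hθ μ⟩
  rw [← kalman, rank, hθ, finrank_top, Module.finrank_fin_fun]
end
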